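/- With G(φ, p) as above, in any vertex cover S of G(φ, p), for every clause C_i at most one vertex of A(C_i) lies outside S, provided that for each variable x_j the cover S omits at least one of B(x_j), B(¬x_j). -/
import Mathlib


open scoped Classical

universe u

/-- A rooted forest on the vertex set of `G` in which every edge of `G` joins two vertices
in ancestor--descendant relationship, presented via its ancestor relation `anc`:
`anc u v` means that `u` is an ancestor of `v` (every vertex is its own ancestor).
The ancestors of each vertex form a chain, which makes the order a forest order. -/
structure ElimForest {V : Type u} (G : SimpleGraph V) where
  anc : V → V → Prop
  refl : ∀ v, anc v v
  antisymm : ∀ u v, anc u v → anc v u → u = v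
  trans : ∀ u v w, anc u v → anc v w → anc u w
  ancTotal : ∀ u v w, anc u w → anc v w → anc u v ∨ anc v u
  adjComparable : ∀ u v, G.Adj u v → anc u v ∨ anc v u

/-- `S` is a vertex cover of `G`: every edge of `G` has an endpoint in `S`. -/
def IsVertexCover {V : Type u} (G : SimpleGraph V) (S : Set V) : Prop :=
  ∀ ⦃u v : V⦄, G.Adj u v → u ∈ S ∨ v ∈ S

/-- The vertex cover number of `G`. -/
noncomputable def vcNum (V : Type u) [Fintype V] (G : SimpleGraph V) : ℕ :=
  sInf {n | ∃ S : Finset V, IsVertexCover G ↑S ∧ S.card = n}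

/-- The `A`-side vertices of `G(φ, p)`: a vertex `a_i(s₁, …, s_k)` for each clause index
`i` and each choice of polarities `s : Fin k → Bool` (`s j = true` meaning the literal
`ℓ_j` itself is chosen, `s j = false` meaning its negation) that is not all-negated. -/
abbrev CnfAVtx (m k : ℕ) : Type := Fin m × {s : Fin k → Bool // s ≠ fun _ => false}

/-- The vertices of `G(φ, p)` (with `γ = 2^(k-1) * p`): the `A`-side vertices, together
with the `B`-side vertices `(x, t, b)` for each variable `x`, index `t ∈ [γ]` and polarity
`b` (`b = true` for `B₊`, i.e. `B(x)`, and `b = false` for `B₋`, i.e. `B(¬x)`). -/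
abbrev CnfVtx (n m k γ : ℕ) : Type := CnfAVtx m k ⊕ (Fin n × Fin γ × Bool)

/-- A `k`-CNF formula `φ` on `n` variables with `m` clauses is a map sending each clause
index `i` and position `j` to the literal `(x, b)`: variable `x` with polarity `b`.
`elit φ i s j` is the literal `s_j ∈ {ℓ_j, ¬ℓ_j}` selected by the polarity choice `s`. -/
def elit {n m k : ℕ} (φ : Fin m → Fin k → Fin n × Bool) (i : Fin m) (s : Fin k → Bool)
    (j : Fin k) : Fin n × Bool :=
  ((φ i j).1, if s j then (φ i j).2 else !(φ i j).2)

/-- Underlying relation of `G(φ, p)`: `a_i(s₁, …, s_k)` is joined to every vertex of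
`B(s₁) ∪ … ∪ B(s_k)`, and `B(x)` is joined completely to `B(¬x)` for every variable. -/
def cnfRel {n m k γ : ℕ} (φ : Fin m → Fin k → Fin n × Bool) :
    CnfVtx n m k γ → CnfVtx n m k γ → Prop
  | Sum.inl (i, s), Sum.inr (x, _, b) => ∃ j : Fin k, elit φ i s.1 j = (x, b)
  | Sum.inr (x, _, b), Sum.inr (x', _, b') => x = x' ∧ b ≠ b'
  | _, _ => False

/-- The tripartite graph `G(φ, p)`. -/
def cnfGraph {n m k : ℕ} (φ : Fin m → Fin k → Fin n × Bool) (p : ℕ) :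
    SimpleGraph (CnfVtx n m k (2 ^ (k - 1) * p)) :=
  SimpleGraph.fromRel (cnfRel φ)

/-- Number of clauses of `φ` satisfied by the truth assignment `f`. -/
noncomputable def satCount {n m k : ℕ} (φ : Fin m → Fin k → Fin n × Bool)
    (f : Fin n → Bool) : ℕ :=
  (Finset.univ.filter fun i : Fin m => ∃ j : Fin k, f (φ i j).1 = (φ i j).2).card

/-- Number of occurrences of the variable `x` in `φ`. -/
noncomputable def occCount {n m k : ℕ} (φ : Fin m → Fin k → Fin n × Bool) (x : Fin n) : ℕ :=
  (Finset.univ.filter fun ij : Fin m × Fin k => (φ ij.1 ij.2).1 = x).card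

/-- The set `B(ℓ)` of `B`-side vertices for the literal `ℓ = (x, b)`. -/
def Bset {n m k γ : ℕ} (x : Fin n) (b : Bool) : Finset (CnfVtx n m k γ) :=
  Finset.univ.image fun t : Fin γ => Sum.inr (x, t, b)

/-- The set `A(C_i)` of `A`-side vertices for the clause `C_i`. -/
noncomputable def Aset {n m k γ : ℕ} (i : Fin m) : Finset (CnfVtx n m k γ) :=
  Finset.univ.filter fun v : CnfVtx n m k γ =>
    ∃ s : {s : Fin k → Bool // s ≠ fun _ => false}, v = Sum.inl (i, s)

/-- In any vertex cover `S` of `G(φ, p)` that, for each variable `x`, omits at least one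
of the sets `B(x)`, `B(¬x)`, at most one vertex of `A(C_i)` lies outside `S`, for every
clause `C_i`. -/
theorem cover_misses_at_most_one (n m k p : ℕ) (hk : 1 ≤ k)
    (φ : Fin m → Fin k → Fin n × Bool)
    (hinj : ∀ i : Fin m, Function.Injective fun j => (φ i j).1)
    (S : Finset (CnfVtx n m k (2 ^ (k - 1) * p)))
    (hcov : IsVertexCover (cnfGraph φ p) ↑S)
    (homit : ∀ x : Fin n, ¬ Bset x true ⊆ S ∨ ¬ Bset x false ⊆ S) :
    ∀ i : Fin m, ((Aset i : Finset (CnfVtx n m k (2 ^ (k - 1) * p))) \ S).card ≤ 1 := by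
  intro i
  by_contra h
  push_neg at h
  rw [Finset.one_lt_card] at h
  obtain ⟨a, ha, a', ha', hne⟩ := h
  rw [Finset.mem_sdiff] at ha ha'
  obtain ⟨haA, haS⟩ := ha
  obtain ⟨ha'A, ha'S⟩ := ha'
  simp only [Aset, Finset.mem_filter, Finset.mem_univ, true_and] at haA ha'A
  obtain ⟨s, rfl⟩ := haA
  obtain ⟨s', rfl⟩ := ha'A
  have hss : s ≠ s' := fun h => hne (by rw [h])
  have hfun : s.1 ≠ s'.1 := fun h => hss (Subtype.ext h)
  obtain ⟨j, hj⟩ := Function.ne_iff.mp hfun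
  -- key: if inl (i,σ) ∉ S then Bset (φ i j).1 (second of elit) ⊆ S
  have key : ∀ σ : {s : Fin k → Bool // s ≠ fun _ => false},
      (Sum.inl (i, σ) : CnfVtx n m k (2 ^ (k - 1) * p)) ∉ (S : Set _) →
      Bset (n := n) (m := m) (k := k) (γ := 2 ^ (k - 1) * p)
        (φ i j).1 (elit φ i σ.1 j).2 ⊆ S := by
    intro σ hσ v hv
    simp only [Bset, Finset.mem_image, Finset.mem_univ, true_and] at hv
    obtain ⟨t, rfl⟩ := hv
    have hadj : (cnfGraph φ p).Adj (Sum.inl (i, σ))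
        (Sum.inr ((φ i j).1, t, (elit φ i σ.1 j).2)) := by
      rw [cnfGraph, SimpleGraph.fromRel_adj]
      refine ⟨by simp, Or.inl ?_⟩
      exact ⟨j, rfl⟩
    rcases hcov hadj with h1 | h1
    · exact absurd h1 hσ
    · exact h1
  have h1 := key s haS
  have h2 := key s' ha'S
  set x := (φ i j).1
  have hb : (elit φ i s'.1 j).2 = !(elit φ i s.1 j).2 := by
    simp only [elit]
    cases hs : s.1 j <;> cases hs' : s'.1 j <;> simp_all
  rw [hb] at h2
  rcases homit x with hx | hx
  · cases hcase : (elit φ i s.1 j).2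
    · rw [hcase] at h2; simp at h2; exact hx h2
    · rw [hcase] at h1; exact hx h1
  · cases hcase : (elit φ i s.1 j).2
    · rw [hcase] at h1; exact hx h1
    · rw [hcase] at h2; simp at h2; exact hx h2
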